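/- Composition lemma for multistep reduction: if t ⇒ D where D = {M₁^{α₁},…,M_n^{α_n}}, and M_i ⇒ E_i for each i, then t ⇒ Σ_i α_i·E_i, and the size of the derivation satisfies |t ⇒ Σ_i α_i E_i| ≤ |t ⇒ D| + max_i |M_i ⇒ E_i|. -/

import Mathlib

/-- Aspects of RSLR: modal □ (`box`) and non-modal ■ (`bbox`). -/
inductive Aspect | box | bbox
deriving DecidableEq, Repr

/-- Ordering on aspects: □ <: □, □ <: ■, ■ <: ■. -/
inductive AspectSub : Aspect → Aspect → Prop
  | refl (a : Aspect) : AspectSub a a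
  | boxLe : AspectSub .box .bbox

/-- RSLR types: A ::= N | aA → A. -/
inductive Ty
  | N
  | arr (a : Aspect) (A B : Ty)
deriving DecidableEq, Repr

/-- Subtyping on RSLR types. -/
inductive TySub : Ty → Ty → Prop
  | refl (A : Ty) : TySub A A
  | trans {A B C} : TySub A B → TySub B C → TySub A C
  | arr {A B C D : Ty} {a b : Aspect} :
      TySub B A → TySub C D → AspectSub b a → TySub (.arr a A C) (.arr b B D)

mutual
  /-- Positively □-free types. -/
  def posFree : Ty → Prop
    | .N => True
    | .arr .box _ _ => False
    | .arr .bbox A B => negFree A ∧ posFree B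
  /-- Negatively □-free types. -/
  def negFree : Ty → Prop
    | .N => True
    | .arr _ A B => posFree A ∧ negFree B
end

/-- A type is □-free when the modal aspect □ occurs nowhere in it. -/
def tyBoxFree : Ty → Prop
  | .N => True
  | .arr a A B => a = .bbox ∧ tyBoxFree A ∧ tyBoxFree B

/-- Terms of RSLR (with named variables). -/
inductive Term
  | var (x : ℕ)
  | num (n : ℕ)
  | s0 | s1 | pred | rand
  | app (t s : Term)
  | lam (x : ℕ) (a : Aspect) (A : Ty) (t : Term)
  | case_ (A : Ty) (t s r q : Term)
  | rec_ (A : Ty) (t s r : Term)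
deriving DecidableEq, Repr

/-- Substitution of `u` for the variable `x` in `t`. -/
def subst (t : Term) (x : ℕ) (u : Term) : Term :=
  match t with
  | .var y => if y = x then u else .var y
  | .num n => .num n
  | .s0 => .s0
  | .s1 => .s1
  | .pred => .pred
  | .rand => .rand
  | .app a b => .app (subst a x u) (subst b x u)
  | .lam y a A b => if y = x then .lam y a A b else .lam y a A (subst b x u)
  | .case_ A a b c d => .case_ A (subst a x u) (subst b x u) (subst c x u) (subst d x u)
  | .rec_ A a b c => .rec_ A (subst a x u) (subst b x u) (subst c x u)

/-- Free variables of a term. -/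
def fv : Term → List ℕ
  | .var x => [x]
  | .app a b => fv a ++ fv b
  | .lam x _ _ b => (fv b).filter (· ≠ x)
  | .case_ _ a b c d => fv a ++ fv b ++ fv c ++ fv d
  | .rec_ _ a b c => fv a ++ fv b ++ fv c
  | _ => []

def Closed (t : Term) : Prop := fv t = []

/-- Explicit terms contain no recursion. -/
def Explicit : Term → Prop
  | .rec_ _ _ _ _ => False
  | .app a b => Explicit a ∧ Explicit b
  | .lam _ _ _ b => Explicit b
  | .case_ _ a b c d => Explicit a ∧ Explicit b ∧ Explicit c ∧ Explicit d
  | _ => True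

/-- Contexts: finite lists of (variable, aspect, type) assignments. -/
abbrev Ctx := List (ℕ × Aspect × Ty)

/-- All assignments in the context are of base type N. -/
def baseCtx (Γ : Ctx) : Prop := ∀ e ∈ Γ, e.2.2 = Ty.N

/-- Every aspect in the context is below `a` (Γ <: a). -/
def ctxLe (Γ : Ctx) (a : Aspect) : Prop := ∀ e ∈ Γ, AspectSub e.2.1 a

/-- The type ■N → N of the constants S₀, S₁, P. -/
def nmArrNN : Ty := .arr .bbox .N .N

/-- RSLR typing. A judgment `Γ; Δ ⊢ t : A` of the paper (with Γ base-typed)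
is rendered as `HasType (Γ ++ Δ) t A` together with `baseCtx Γ` side conditions
where splitting matters. -/
inductive HasType : Ctx → Term → Ty → Prop
  | var {Γ : Ctx} {x a A} : (x, a, A) ∈ Γ → HasType Γ (.var x) A
  | num {Γ n} : HasType Γ (.num n) .N
  | s0 {Γ} : HasType Γ .s0 nmArrNN
  | s1 {Γ} : HasType Γ .s1 nmArrNN
  | pred {Γ} : HasType Γ .pred nmArrNN
  | rand {Γ} : HasType Γ .rand .N
  | sub {Γ t A B} : HasType Γ t A → TySub A B → HasType Γ t B
  | lam {Γ x a A B t} : HasType ((x, a, A) :: Γ) t B →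
      HasType Γ (.lam x a A t) (.arr a A B)
  | case_ {Γ Δ₁ Δ₂ Δ₃ Δ₄ : Ctx} {t s r q A} :
      baseCtx Γ →
      HasType (Γ ++ Δ₁) t .N →
      HasType (Γ ++ Δ₂) s A →
      HasType (Γ ++ Δ₃) r A →
      HasType (Γ ++ Δ₄) q A →
      tyBoxFree A →
      HasType (Γ ++ Δ₁ ++ Δ₂ ++ Δ₃ ++ Δ₄) (.case_ A t s r q) A
  | rec_ {Γ₁ Γ₂ Δ₁ Δ₂ : Ctx} {t s r A} :
      baseCtx Γ₁ → baseCtx Γ₂ →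
      HasType (Γ₁ ++ Δ₁) t .N →
      HasType (Γ₁ ++ Γ₂ ++ Δ₂) s A →
      HasType (Γ₁ ++ Γ₂) r (.arr .box .N (.arr .bbox A A)) →
      ctxLe (Γ₁ ++ Δ₁) .box →
      tyBoxFree A →
      HasType (Γ₁ ++ Γ₂ ++ Δ₁ ++ Δ₂) (.rec_ A t s r) A
  | app {Γ Δ₁ Δ₂ : Ctx} {t s a A B} :
      baseCtx Γ →
      HasType (Γ ++ Δ₁) t (.arr a A B) →
      HasType (Γ ++ Δ₂) s A →
      ctxLe (Γ ++ Δ₂) a →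
      HasType (Γ ++ Δ₁ ++ Δ₂) (.app t s) B

/-- Probabilistic one-step reduction: a term reduces to a sequence of terms,
each with equal probability. -/
inductive Step : Term → List Term → Prop
  | caseZero {A z e o} : Step (.case_ A (.num 0) z e o) [z]
  | caseEven {A n z e o} : Step (.case_ A (.num (2 * (n + 1))) z e o) [e]
  | caseOdd {A n z e o} : Step (.case_ A (.num (2 * n + 1)) z e o) [o]
  | recZero {A g f} : Step (.rec_ A (.num 0) g f) [g]
  | recSucc {A n g f} : Step (.rec_ A (.num (n + 1)) g f)
      [.app (.app f (.num (n + 1))) (.rec_ A (.num ((n + 1) / 2)) g f)]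
  | succ0 {n} : Step (.app .s0 (.num n)) [.num (2 * n)]
  | succ1 {n} : Step (.app .s1 (.num n)) [.num (2 * n + 1)]
  | predStep {n} : Step (.app .pred (.num n)) [.num (n / 2)]
  | betaN {x a t n} : Step (.app (.lam x a .N t) (.num n)) [subst t x (.num n)]
  | betaH {x a b A B t s} : Step (.app (.lam x a (.arr b A B) t) s) [subst t x s]
  | swap {x a A t s r} :
      Step (.app (.app (.lam x a A t) s) r) [.app (.lam x a A (.app t r)) s]
  | randStep : Step .rand [.num 0, .num 1]
  | appL {t s l} : Step t l → Step (.app t s) (l.map fun t' => .app t' s)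
  | appR {t s l} : Step s l → Step (.app t s) (l.map fun s' => .app t s')
  | lamC {x a A t l} : Step t l → Step (.lam x a A t) (l.map fun t' => .lam x a A t')
  | caseT {A t s r q l} : Step t l →
      Step (.case_ A t s r q) (l.map fun t' => .case_ A t' s r q)
  | caseS {A t s r q l} : Step s l →
      Step (.case_ A t s r q) (l.map fun s' => .case_ A t s' r q)
  | caseR {A t s r q l} : Step r l →
      Step (.case_ A t s r q) (l.map fun r' => .case_ A t s r' q)
  | caseQ {A t s r q l} : Step q l →
      Step (.case_ A t s r q) (l.map fun q' => .case_ A t s r q')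
  | recT {A t s r l} : Step t l →
      Step (.rec_ A t s r) (l.map fun t' => .rec_ A t' s r)

def NormalForm (t : Term) : Prop := ∀ l, ¬ Step t l

/-- The Dirac distribution on a term. -/
noncomputable def dirac (t : Term) : Term → ℝ := fun s => if s = t then 1 else 0

/-- Multistep reduction to a distribution over normal forms. -/
inductive MStep : Term → (Term → ℝ) → Prop
  | nf {t} : NormalForm t → MStep t (dirac t)
  | step {t : Term} {ts : List Term} {Ds : List (Term → ℝ)} :
      Step t ts → ts.length = Ds.length →
      (∀ p ∈ ts.zip Ds, MStep p.1 p.2) →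
      MStep t (fun s => ((Ds.map fun D => D s).sum) / (ts.length : ℝ))

/-- The relaxed multistep reduction relation ⇒, indexed by derivation size. -/
inductive MStepR : ℕ → Term → (Term → ℝ) → Prop
  | ax (t : Term) : MStepR 0 t (dirac t)
  | step {t : Term} {ts : List Term} {Ds : List (Term → ℝ)} {ks : List ℕ} :
      Step t ts → ts.length = Ds.length → Ds.length = ks.length →
      (∀ p ∈ ts.zip (Ds.zip ks), MStepR p.2.2 p.1 p.2.1) →
      MStepR (ks.foldr max 0 + 1) t (fun s => ((Ds.map fun D => D s).sum) / (ts.length : ℝ))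

/-- Size of a numeral: ⌈log₂ n⌉, taken to be at least 1. -/
def numSize (n : ℕ) : ℕ := max (Nat.clog 2 n) 1

/-- Size of a term, numerals having logarithmic size. -/
def tsize : Term → ℕ
  | .var _ => 1
  | .num n => numSize n
  | .s0 => 1 | .s1 => 1 | .pred => 1 | .rand => 1
  | .app a b => tsize a + tsize b
  | .lam _ _ _ b => tsize b + 1
  | .case_ _ a b c d => tsize a + tsize b + tsize c + tsize d + 1
  | .rec_ _ a b c => tsize a + tsize b + tsize c + 1

/-- Size of a term counting every numeral as 1. -/
def wsize : Term → ℕ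
  | .var _ => 1
  | .num _ => 1
  | .s0 => 1 | .s1 => 1 | .pred => 1 | .rand => 1
  | .app a b => wsize a + wsize b
  | .lam _ _ _ b => wsize b + 1
  | .case_ _ a b c d => wsize a + wsize b + wsize c + wsize d + 1
  | .rec_ _ a b c => wsize a + wsize b + wsize c + 1

/-- Maximum size of a numeral occurring in a term (0 if none). -/
def nsize : Term → ℕ
  | .num n => numSize n
  | .app a b => max (nsize a) (nsize b)
  | .lam _ _ _ b => nsize b
  | .case_ _ a b c d => max (max (nsize a) (nsize b)) (max (nsize c) (nsize d))
  | .rec_ _ a b c => max (nsize a) (max (nsize b) (nsize c))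
  | _ => 0

/-- Iterated application `t u₁ … u_k`. -/
def appL (t : Term) (us : List Term) : Term := us.foldl Term.app t

def IsConst : Term → Prop := fun c =>
  (∃ n, c = .num n) ∨ c = .s0 ∨ c = .s1 ∨ c = .pred ∨ c = .rand

/-- Big-step normal-form evaluation ⇓_nf for explicit closed terms of type N,
indexed by probability, result numeral, derivation size, and the list of terms
occurring in the derivation. -/
inductive Nf : Term → ℝ → ℕ → ℕ → List Term → Prop
  | num {n} : Nf (.num n) 1 n 1 [.num n]
  | rand0 : Nf .rand (1/2) 0 1 [.rand]
  | rand1 : Nf .rand (1/2) 1 1 [.rand]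
  | succ0 {t α n k l} : Nf t α n k l →
      Nf (.app .s0 t) α (2 * n) (k + 1) (.app .s0 t :: l)
  | succ1 {t α n k l} : Nf t α n k l →
      Nf (.app .s1 t) α (2 * n + 1) (k + 1) (.app .s1 t :: l)
  | pred0 {t α k l} : Nf t α 0 k l →
      Nf (.app .pred t) α 0 (k + 1) (.app .pred t :: l)
  | predS {t α n k l} : Nf t α n k l → 1 ≤ n →
      Nf (.app .pred t) α (n / 2) (k + 1) (.app .pred t :: l)
  | caseZ {A t s r q us α β m k₁ k₂ l₁ l₂} :
      Nf t α 0 k₁ l₁ → Nf (appL s us) β m k₂ l₂ →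
      Nf (appL (.case_ A t s r q) us) (α * β) m (k₁ + k₂ + 1)
        (appL (.case_ A t s r q) us :: l₁ ++ l₂)
  | caseE {A t s r q us α β n m k₁ k₂ l₁ l₂} :
      Nf t α (2 * n) k₁ l₁ → 1 ≤ n → Nf (appL r us) β m k₂ l₂ →
      Nf (appL (.case_ A t s r q) us) (α * β) m (k₁ + k₂ + 1)
        (appL (.case_ A t s r q) us :: l₁ ++ l₂)
  | caseO {A t s r q us α β n m k₁ k₂ l₁ l₂} :
      Nf t α (2 * n + 1) k₁ l₁ → Nf (appL q us) β m k₂ l₂ →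
      Nf (appL (.case_ A t s r q) us) (α * β) m (k₁ + k₂ + 1)
        (appL (.case_ A t s r q) us :: l₁ ++ l₂)
  | betaN {x a t s rs α β n m k₁ k₂ l₁ l₂} :
      Nf s α n k₁ l₁ → Nf (appL (subst t x (.num n)) rs) β m k₂ l₂ →
      Nf (appL (.app (.lam x a .N t) s) rs) (α * β) m (k₁ + k₂ + 1)
        (appL (.app (.lam x a .N t) s) rs :: l₁ ++ l₂)
  | betaH {x a b A B t s rs β n k l} :
      Nf (appL (subst t x s) rs) β n k l →
      Nf (appL (.app (.lam x a (.arr b A B) t) s) rs) β n (k + 1)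
        (appL (.app (.lam x a (.arr b A B) t) s) rs :: l)

/-- Recursion-elimination evaluation ⇓_rf, indexed by probability, result term,
derivation size, and the terms occurring in the derivation. -/
inductive Rf : Term → ℝ → Term → ℕ → List Term → Prop
  | const {c} : IsConst c → Rf c 1 c 1 [c]
  | succ0 {t α v k l} : Rf t α v k l →
      Rf (.app .s0 t) α (.app .s0 v) (k + 1) (.app .s0 t :: l)
  | succ1 {t α v k l} : Rf t α v k l →
      Rf (.app .s1 t) α (.app .s1 v) (k + 1) (.app .s1 t :: l)
  | predC {t α v k l} : Rf t α v k l →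
      Rf (.app .pred t) α (.app .pred v) (k + 1) (.app .pred t :: l)
  | caseC {A t s r q α β γ δ v z a b kt ks kr kq lt ls lr lq}
      {us cs : List Term} {εs : List ℝ} {kus : List ℕ} {lus : List (List Term)} :
      Rf t α v kt lt → Rf s β z ks ls → Rf r γ a kr lr → Rf q δ b kq lq →
      us.length = εs.length → εs.length = cs.length →
      cs.length = kus.length → kus.length = lus.length →
      (∀ p ∈ us.zip (εs.zip (cs.zip (kus.zip lus))),
        Rf p.1 p.2.1 p.2.2.1 p.2.2.2.1 p.2.2.2.2) →
      Rf (appL (.case_ A t s r q) us) (α * β * γ * δ * εs.prod)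
        (appL (.case_ A v z a b) cs) (kt + ks + kr + kq + kus.sum + 1)
        (appL (.case_ A t s r q) us :: lt ++ ls ++ lr ++ lq ++ lus.flatten)
  | recC {A t s r α β γ v z n kt kn ks lt ln ls}
      {qs bs : List Term} {δs : List ℝ} {kqs : List ℕ} {lqs : List (List Term)}
      {rres : List Term} {γs : List ℝ} {krs : List ℕ} {lrs : List (List Term)} :
      Rf t α v kt lt →
      Nf v β n kn ln →
      Rf s γ z ks ls →
      qs.length = δs.length → δs.length = bs.length →
      bs.length = kqs.length → kqs.length = lqs.length →
      (∀ p ∈ qs.zip (δs.zip (bs.zip (kqs.zip lqs))),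
        Rf p.1 p.2.1 p.2.2.1 p.2.2.2.1 p.2.2.2.2) →
      rres.length = Nat.size n → rres.length = γs.length →
      γs.length = krs.length → krs.length = lrs.length →
      (∀ p ∈ (List.range (Nat.size n)).zip (γs.zip (rres.zip (krs.zip lrs))),
        Rf (.app r (.num (n / 2 ^ p.1))) p.2.1 p.2.2.1 p.2.2.2.1 p.2.2.2.2) →
      Rf (appL (.rec_ A t s r) qs) (α * β * γ * γs.prod * δs.prod)
        (appL (rres.foldr Term.app z) bs) (kt + kn + ks + kqs.sum + krs.sum + 1)
        (appL (.rec_ A t s r) qs :: lt ++ ln ++ ls ++ lqs.flatten ++ lrs.flatten)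
  | betaBox {x t s rs α β γ z n u k₁ k₂ k₃ l₁ l₂ l₃} :
      Rf s α z k₁ l₁ → Nf z γ n k₂ l₂ →
      Rf (appL (subst t x (.num n)) rs) β u k₃ l₃ →
      Rf (appL (.app (.lam x .box .N t) s) rs) (α * γ * β) u (k₁ + k₂ + k₃ + 1)
        (appL (.app (.lam x .box .N t) s) rs :: l₁ ++ l₂ ++ l₃)
  | betaBBox {x t s rs α β γ z n u k₁ k₂ k₃ l₁ l₂ l₃} :
      Rf s α z k₁ l₁ → Nf z γ n k₂ l₂ →
      Rf (appL t rs) β u k₃ l₃ →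
      Rf (appL (.app (.lam x .bbox .N t) s) rs) (α * γ * β)
        (.app (.lam x .bbox .N u) (.num n)) (k₁ + k₂ + k₃ + 1)
        (appL (.app (.lam x .bbox .N t) s) rs :: l₁ ++ l₂ ++ l₃)
  | betaH {x a b A B t s rs β u k l} :
      Rf (appL (subst t x s) rs) β u k l →
      Rf (appL (.app (.lam x a (.arr b A B) t) s) rs) β u (k + 1)
        (appL (.app (.lam x a (.arr b A B) t) s) rs :: l)
  | lamC {x a A t β u k l} :
      Rf t β u k l →
      Rf (.lam x a A t) β (.lam x a A u) (k + 1) (.lam x a A t :: l)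
  | varC {x} {ts ss : List Term} {αs : List ℝ} {ks : List ℕ} {ls : List (List Term)} :
      ts.length = αs.length → αs.length = ss.length →
      ss.length = ks.length → ks.length = ls.length →
      (∀ p ∈ ts.zip (αs.zip (ss.zip (ks.zip ls))),
        Rf p.1 p.2.1 p.2.2.1 p.2.2.2.1 p.2.2.2.2) →
      Rf (appL (.var x) ts) αs.prod (appL (.var x) ss) (ks.sum + 1)
        (appL (.var x) ts :: ls.flatten)

/-- First-order types a₁N → … → a_kN → N. -/
def FOty : ℕ → Ty → Prop
  | 0, .N => True
  | k + 1, .arr _ .N B => FOty k B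
  | _, _ => False

/-- First-order terms of a given arity: closed, well-typed terms of
type a₁N → … → a_kN → N. -/
def IsFirstOrder (t : Term) (k : ℕ) : Prop :=
  Closed t ∧ ∃ A, HasType [] t A ∧ FOty k A

/-!
Induction on the derivation of `t ⇒ D`. At an axiom `t ⇒ δ_t` the mixture is just `E_t`. At a
step `t → t₁, …, t_n` with `t_i ⇒ D_i`, the distributions `D_i` are nonnegative, so each of them
vanishes wherever their average `D` does; the induction hypothesis then gives `t_i ⇒ Σ_M D_i(M)·E_M`
with size at most `|t_i ⇒ D_i| + max_M |M ⇒ E_M|`, and since mixing commutes with averaging the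
same step yields `t ⇒ Σ_M D(M)·E_M`.
-/

theorem Step.ne_nil {t : Term} {ts : List Term} (h : Step t ts) : ts ≠ [] := by
  induction h <;> simp_all

section Lists

variable {α β γ : Type*}

theorem List.exists_mem_zip_zip_of_mem {xs : List α} {ys : List β} {zs : List γ}
    (hxy : xs.length = ys.length) (hyz : ys.length = zs.length) {y : β} (hy : y ∈ ys) :
    ∃ p ∈ xs.zip (ys.zip zs), p.2.1 = y := by
  have hyz' : y ∈ (ys.zip zs).map Prod.fst := by rwa [List.map_fst_zip hyz.le]
  have hzip : ys.zip zs = (xs.zip (ys.zip zs)).map Prod.snd :=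
    (List.map_snd_zip (by simp [hxy, hyz])).symm
  rw [hzip] at hyz'
  simpa using hyz'

theorem List.eq_zero_of_sum_map_div_eq_zero {Ds : List (α → ℝ)} {n : ℝ} {a : α}
    (hn : n ≠ 0) (hDs : ∀ D ∈ Ds, 0 ≤ D a) (h : (Ds.map fun D => D a).sum / n = 0)
    {D : α → ℝ} (hD : D ∈ Ds) : D a = 0 :=
  List.all_zero_of_le_zero_le_of_sum_eq_zero (by simpa using hDs)
    ((div_eq_zero_iff.mp h).resolve_right hn) (List.mem_map_of_mem hD)

theorem List.exists_foldr_max_le_of_forall_mem_zip {P : α → β → ℕ → Prop} {c : ℕ} :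
    ∀ {xs : List α} {ys : List β} {ks : List ℕ},
      xs.length = ys.length → ys.length = ks.length →
      (∀ p ∈ xs.zip (ys.zip ks), ∃ k', P p.1 p.2.1 k' ∧ k' ≤ p.2.2 + c) →
      ∃ ks' : List ℕ, ks'.length = ks.length ∧ (∀ p ∈ xs.zip (ys.zip ks'), P p.1 p.2.1 p.2.2) ∧
        ks'.foldr max 0 ≤ ks.foldr max 0 + c
  | [], _, [], _, _, _ => ⟨[], rfl, by simp, by simp⟩
  | x :: xs, y :: ys, k :: ks, hxy, hyk, h => by
    obtain ⟨k', hk'P, hk' : k' ≤ k + c⟩ := h (x, y, k) (by simp)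
    obtain ⟨ks', hlen, hP, hmax⟩ := exists_foldr_max_le_of_forall_mem_zip (P := P)
      (by simpa using hxy) (by simpa using hyk) fun p hp => h p (by simp [hp])
    refine ⟨k' :: ks', by simp [hlen], ?_, ?_⟩
    · simpa [hk'P] using hP
    · simp only [List.foldr_cons]
      omega
  | [], _ :: _, _, hxy, _, _ | _ :: _, [], _, hxy, _, _ => by simp at hxy
  | _, [], _ :: _, _, hyk, _ | _, _ :: _, [], _, hyk, _ => by simp at hyk

end Lists

theorem MStepR.nonneg {k : ℕ} {t : Term} {D : Term → ℝ} (h : MStepR k t D) (s : Term) :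
    0 ≤ D s := by
  induction h generalizing s with
  | ax t => unfold dirac; split_ifs <;> norm_num
  | step _ hlen₁ hlen₂ _ ih =>
    refine div_nonneg (List.sum_nonneg ?_) (Nat.cast_nonneg _)
    simp only [List.mem_map]
    rintro _ ⟨D, hD, rfl⟩
    obtain ⟨p, hp, rfl⟩ := List.exists_mem_zip_zip_of_mem hlen₁ hlen₂ hD
    exact ih p hp s

theorem MStepR.step_eq_zero_of_average_eq_zero {t : Term} {ts : List Term}
    {Ds : List (Term → ℝ)} {ks : List ℕ} (hstep : Step t ts) (hlen₁ : ts.length = Ds.length)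
    (hlen₂ : Ds.length = ks.length) (h : ∀ p ∈ ts.zip (Ds.zip ks), MStepR p.2.2 p.1 p.2.1)
    {M : Term} (hM : (Ds.map fun D => D M).sum / ts.length = 0) :
    ∀ p ∈ ts.zip (Ds.zip ks), p.2.1 M = 0 := by
  intro p hp
  refine List.eq_zero_of_sum_map_div_eq_zero (by simpa using hstep.ne_nil) (fun D hD => ?_) hM
    (List.of_mem_zip (List.of_mem_zip hp).2).1
  obtain ⟨q, hq, rfl⟩ := List.exists_mem_zip_zip_of_mem hlen₁ hlen₂ hD
  exact (h q hq).nonneg M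

noncomputable def mixture {α β : Type*} (S : Finset α) (D : α → ℝ) (F : α → β → ℝ) : β → ℝ :=
  fun s => ∑ M ∈ S, D M * F M s

theorem mixture_dirac {S : Finset Term} {t : Term} (ht : t ∈ S) (F : Term → Term → ℝ) :
    mixture S (dirac t) F = F t := by
  funext s
  simp [mixture, dirac, ht]

theorem mixture_average {α β : Type*} (S : Finset α) (Ds : List (α → ℝ)) (n : ℝ)
    (F : α → β → ℝ) :
    mixture S (fun M => (Ds.map fun D => D M).sum / n) F =
      fun s => ((Ds.map (mixture S · F)).map fun D => D s).sum / n := by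
  funext s
  induction Ds with
  | nil => simp [mixture]
  | cons D Ds ih =>
    simp only [mixture, List.map_cons, List.sum_cons, add_div, add_mul,
      Finset.sum_add_distrib] at ih ⊢
    rw [← ih, Finset.sum_div]
    simp only [div_mul_eq_mul_div]

theorem MStepR.step_mixture {t : Term} {ts : List Term} {Ds : List (Term → ℝ)} {ks : List ℕ}
    {S : Finset Term} {F : Term → Term → ℝ} (hstep : Step t ts) (hlen₁ : ts.length = Ds.length)
    (hlen₂ : Ds.length = ks.length)
    (h : ∀ p ∈ ts.zip (Ds.zip ks), MStepR p.2.2 p.1 (mixture S p.2.1 F)) :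
    MStepR (ks.foldr max 0 + 1) t
      (mixture S (fun M => (Ds.map fun D => D M).sum / ts.length) F) := by
  rw [mixture_average]
  refine MStepR.step hstep (by simpa) (by simpa) fun p hp => ?_
  simp only [List.zip_map_left, List.zip_map_right, List.mem_map] at hp
  obtain ⟨q, hq, rfl⟩ := hp
  exact h q hq

/-- composition lemma for the relaxed multistep reduction ⇒:
if t ⇒ D (finitely supported) and each M in the support satisfies M ⇒ E_M,
then t ⇒ Σ_M D(M)·E_M, with derivation size bounded by
|t ⇒ D| + max_M |M ⇒ E_M|. -/
theorem mstepR_composition {k : ℕ} {t : Term} {D : Term → ℝ}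
    (h : MStepR k t D) (S : Finset Term)
    (hS : ∀ M, M ∉ S → D M = 0)
    (F : Term → Term → ℝ) (kf : Term → ℕ)
    (hF : ∀ M ∈ S, MStepR (kf M) M (F M)) :
    ∃ k', MStepR k' t (fun s => ∑ M ∈ S, D M * F M s) ∧ k' ≤ k + S.sup kf := by
  induction h with
  | ax t =>
    have ht : t ∈ S := by
      by_contra ht
      simpa [dirac] using hS t ht
    refine ⟨kf t, ?_, by simpa using S.le_sup ht⟩
    show MStepR _ t (mixture S (dirac t) F)
    rw [mixture_dirac ht]
    exact hF t ht
  | @step t ts Ds ks hstep hlen₁ hlen₂ hchild ih =>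
    have hchild_vanish : ∀ p ∈ ts.zip (Ds.zip ks), ∀ M ∉ S, p.2.1 M = 0 := fun p hp M hM =>
      MStepR.step_eq_zero_of_average_eq_zero hstep hlen₁ hlen₂ hchild (hS M hM) p hp
    obtain ⟨ks', hlen', hchild', hmax⟩ := List.exists_foldr_max_le_of_forall_mem_zip
      (P := fun t D k => MStepR k t (mixture S D F)) hlen₁ hlen₂
      fun p hp => ih p hp (hchild_vanish p hp)
    exact ⟨_, MStepR.step_mixture hstep hlen₁ (hlen₂.trans hlen'.symm) hchild', by omega⟩
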